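/- arXiv:1911.02113 — 4 statements merged into one kernel-verified Lean document; each statement's English description precedes it below -/
import Mathlib

section
/- For the function G(p,ε) = (1−ε)·(p + ε·H₂(p))/(ε + (1−ε)p) defined for p ∈ (0,1) and ε ∈ (0,1), where H₂ is the binary entropy, the equation G(p,ε) = 1 + ε·log₂((1−p)/p) holds if and only if 2(1−p) = p^ε. -/
open Real

/-- The binary entropy function (base-2 logarithms). -/
noncomputable def binaryEntropy (p : ℝ) : ℝ :=
  -(p * Real.logb 2 p) - (1 - p) * Real.logb 2 (1 - p)

/-!
Clearing the (positive) denominator, the difference of the two sides of `G(p,ε) = 1 + ε log₂((1−p)/p)`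
collapses to `ε (ε log₂ p − log₂ (2(1−p)))`: all terms carrying the entropy cancel. Since `ε ≠ 0` and
`log₂` is injective on the positive reals, the equation is therefore equivalent to `p^ε = 2(1−p)`.
-/

lemma dicode_numerator_sub_eq {p : ℝ} (hp₀ : p ≠ 0) (hp₁ : 1 - p ≠ 0) (ε : ℝ) :
    (1 - ε) * (p + ε * binaryEntropy p) - (1 + ε * logb 2 ((1 - p) / p)) * (ε + (1 - ε) * p)
      = ε * (ε * logb 2 p - logb 2 (2 * (1 - p))) := by
  rw [binaryEntropy, logb_div hp₁ hp₀, logb_mul two_ne_zero hp₁, logb_self_eq_one one_lt_two]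
  ring

lemma rpow_eq_iff_mul_logb_eq {b x y q : ℝ} (hb : 1 < b) (hx : 0 < x) (hq : 0 < q) :
    x ^ y = q ↔ y * logb b x = logb b q := by
  rw [← logb_rpow_eq_mul_logb_of_pos hx]
  exact ((logb_injOn_pos hb).eq_iff (rpow_pos_of_pos hx y) hq).symm

/-- For `G(p,ε) = (1−ε)(p + ε H₂(p))/(ε + (1−ε)p)` with
`p, ε ∈ (0,1)`, `G(p,ε) = 1 + ε log₂((1−p)/p)` iff `2(1−p) = p^ε`. -/
theorem DEC_derivative_zero_iff
    (p ε : ℝ) (hp : p ∈ Set.Ioo (0:ℝ) 1) (hε : ε ∈ Set.Ioo (0:ℝ) 1) :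
    (1 - ε) * (p + ε * binaryEntropy p) / (ε + (1 - ε) * p)
      = 1 + ε * Real.logb 2 ((1 - p) / p)
    ↔ 2 * (1 - p) = p ^ ε := by
  obtain ⟨hp₀, hp₁⟩ := hp
  obtain ⟨hε₀, hε₁⟩ := hε
  have h1p : 0 < 1 - p := sub_pos.mpr hp₁
  have hden : ε + (1 - ε) * p ≠ 0 := by nlinarith
  rw [div_eq_iff hden, ← sub_eq_zero, dicode_numerator_sub_eq hp₀.ne' h1p.ne', mul_eq_zero,
    or_iff_right hε₀.ne', sub_eq_zero, eq_comm (b := p ^ ε),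
    rpow_eq_iff_mul_logb_eq one_lt_two hp₀ (mul_pos two_pos h1p)]
end

section
/- Fix p ∈ (0,1) and set K = (1 + (1−p)·p^{p/(1−p)})^{-1}. Define, for z ∈ [0,1], g₀(z) = z·log₂(1/K) + (1−z)·[(1−p)·log₂((1−p)/(1−K)) + p·log₂(p/K)], g₁(z) = z·[p·log₂(p/K) + (1−p)·log₂((1−p)/(1−K))] + (1−z)·log₂(1/K), F₀(z) = z + (1−p)(1−z), F₁(z) = p·z, and h(z) = z·log₂(p(1−K)/((1−p)K)) + (1−z)·log₂(p)/(1−p). Then for every z ∈ [0,1], log₂(1/K) + h(z) = g₀(z) + h(F₀(z)) = g₁(z) + h(F₁(z)). In particular, ρ = log₂(1/K) = log₂(1 + (1−p)·p^{p/(1−p)}) and h solve the Bellman equation for the POST channel dynamic program. -/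
open Real

/-!
With `K = (1 + (1 - p) p^{p/(1-p)})⁻¹` one has `1 - K = (1 - p) p^{p/(1-p)} K`. This makes the
coefficient of `z` in `h` equal to `log₂ p / (1 - p)`, so `h` is constant, and it makes the
reward `(1 - p) log₂((1 - p)/(1 - K)) + p log₂(p/K)` of the mixed Q-graph node equal to
`log₂(1/K)`. Hence `g₀ ≡ g₁ ≡ log₂(1/K)`, and both Bellman equations hold trivially.
-/

noncomputable def postK (p : ℝ) : ℝ := (1 + (1 - p) * p ^ (p / (1 - p)))⁻¹

section

variable {p : ℝ}

lemma one_sub_mul_rpow_pos (hp0 : 0 < p) (hp1 : p < 1) : 0 < (1 - p) * p ^ (p / (1 - p)) :=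
  mul_pos (by linarith) (rpow_pos_of_pos hp0 _)

lemma postK_pos (hp0 : 0 < p) (hp1 : p < 1) : 0 < postK p := by
  have := one_sub_mul_rpow_pos hp0 hp1
  exact inv_pos.mpr (by linarith)

lemma one_sub_postK (hp0 : 0 < p) (hp1 : p < 1) :
    1 - postK p = (1 - p) * p ^ (p / (1 - p)) * postK p := by
  have := one_sub_mul_rpow_pos hp0 hp1
  unfold postK
  field_simp
  ring

lemma postK_odds (hp0 : 0 < p) (hp1 : p < 1) :
    p * (1 - postK p) / ((1 - p) * postK p) = p ^ (1 - p)⁻¹ := by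
  have hK := postK_pos hp0 hp1
  have hexp : (1 - p)⁻¹ = p / (1 - p) + 1 := by field_simp [(by linarith : 1 - p ≠ 0)]; ring
  rw [one_sub_postK hp0 hp1, hexp, rpow_add_one hp0.ne']
  field_simp [(by linarith : 1 - p ≠ 0)]

lemma logb_postK_odds (b : ℝ) (hp0 : 0 < p) (hp1 : p < 1) :
    logb b (p * (1 - postK p) / ((1 - p) * postK p)) = logb b p / (1 - p) := by
  rw [postK_odds hp0 hp1, logb_rpow_eq_mul_logb_of_pos hp0, inv_mul_eq_div]

lemma mixture_logb_postK (b : ℝ) (hp0 : 0 < p) (hp1 : p < 1) :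
    (1 - p) * logb b ((1 - p) / (1 - postK p)) + p * logb b (p / postK p)
      = logb b (1 / postK p) := by
  have hK := postK_pos hp0 hp1
  have hq : 0 < p ^ (p / (1 - p)) := rpow_pos_of_pos hp0 _
  have h1p : (1 - p) ≠ 0 := by linarith
  rw [one_sub_postK hp0 hp1, logb_div h1p (by positivity), logb_mul (by positivity) hK.ne',
    logb_mul h1p hq.ne', logb_rpow_eq_mul_logb_of_pos hp0, logb_div hp0.ne' hK.ne', one_div,
    logb_inv]
  field_simp
  ring

end

theorem POST_bellman_verification_general
    (p K : ℝ) (hp : p ∈ Set.Ioo (0:ℝ) 1)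
    (hK : K = (1 + (1 - p) * p ^ (p / (1 - p)))⁻¹)
    (g₀ g₁ F₀ F₁ h : ℝ → ℝ)
    (hg₀ : ∀ z, g₀ z = z * Real.logb 2 (1 / K)
      + (1 - z) * ((1 - p) * Real.logb 2 ((1 - p) / (1 - K))
                   + p * Real.logb 2 (p / K)))
    (hg₁ : ∀ z, g₁ z = z * (p * Real.logb 2 (p / K)
                   + (1 - p) * Real.logb 2 ((1 - p) / (1 - K)))
      + (1 - z) * Real.logb 2 (1 / K))
    (hh : ∀ z, h z = z * Real.logb 2 (p * (1 - K) / ((1 - p) * K))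
      + (1 - z) * Real.logb 2 p / (1 - p)) :
    ∀ z ∈ Set.Icc (0:ℝ) 1,
      Real.logb 2 (1 / K) + h z = g₀ z + h (F₀ z) ∧
      Real.logb 2 (1 / K) + h z = g₁ z + h (F₁ z) := by
  obtain ⟨hp0, hp1⟩ := hp
  change K = postK p at hK
  subst hK
  have h_const : ∀ z, h z = logb 2 p / (1 - p) := fun z => by
    rw [hh, logb_postK_odds 2 hp0 hp1]
    ring
  have hmix := mixture_logb_postK 2 hp0 hp1
  intro z _
  constructor
  · rw [h_const, h_const, hg₀, hmix]
    ring
  · rw [h_const, h_const, hg₁, add_comm (p * _), hmix]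
    ring

/-- Verification of the Bellman equation for the POST channel
dynamic program: with `K = (1 + (1−p)p^{p/(1−p)})⁻¹`, the value
`ρ = log₂(1/K)` and relative-value function `h` satisfy
`ρ + h(z) = g₀(z) + h(F₀(z)) = g₁(z) + h(F₁(z))` for all `z ∈ [0,1]`. -/
theorem POST_bellman_verification
    (p K : ℝ) (hp : p ∈ Set.Ioo (0:ℝ) 1)
    (hK : K = (1 + (1 - p) * p ^ (p / (1 - p)))⁻¹)
    (g₀ g₁ F₀ F₁ h : ℝ → ℝ)
    (hg₀ : ∀ z, g₀ z = z * Real.logb 2 (1 / K)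
      + (1 - z) * ((1 - p) * Real.logb 2 ((1 - p) / (1 - K))
                   + p * Real.logb 2 (p / K)))
    (hg₁ : ∀ z, g₁ z = z * (p * Real.logb 2 (p / K)
                   + (1 - p) * Real.logb 2 ((1 - p) / (1 - K)))
      + (1 - z) * Real.logb 2 (1 / K))
    (hF₀ : ∀ z, F₀ z = z + (1 - p) * (1 - z))
    (hF₁ : ∀ z, F₁ z = p * z)
    (hh : ∀ z, h z = z * Real.logb 2 (p * (1 - K) / ((1 - p) * K))
      + (1 - z) * Real.logb 2 p / (1 - p)) :
    ∀ z ∈ Set.Icc (0:ℝ) 1,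
      Real.logb 2 (1 / K) + h z = g₀ z + h (F₀ z) ∧
      Real.logb 2 (1 / K) + h z = g₁ z + h (F₁ z) :=
  POST_bellman_verification_general p K hp hK g₀ g₁ F₀ F₁ h hg₀ hg₁ hh
end

section
/- For p ∈ (0,1) and K = (1 + (1−p)·p^{p/(1−p)})^{-1}, the identity log₂(p(1−K)/((1−p)K)) − 2p·log₂(p(1−K)/((1−p)K)) − log₂(p(1−p)K/(1−K)) = 0 holds. -/
/-!
With `a = p ^ (p / (1 - p))` one has `(1 - K) / K = (1 - p) a`, so the two arguments of `logb` are
`p a` and `p / a`. The left-hand side is then `2 ((1 - p) log a - p log p) / log 2`, which vanishes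
because `(1 - p) log a = p log p`.
-/

open Real

theorem one_sub_div_eq_of_eq_inv_one_add {F : Type*} [Field F] {r K : F} (hr : 1 + r ≠ 0)
    (hK : K = (1 + r)⁻¹) : (1 - K) / K = r := by
  subst hK
  field_simp
  ring

/-- For `p ∈ (0,1)` and `K = (1 + (1−p)p^{p/(1−p)})⁻¹`,
`log₂(p(1−K)/((1−p)K)) − 2p·log₂(p(1−K)/((1−p)K)) − log₂(p(1−p)K/(1−K)) = 0`. -/
theorem POST_algebraic_identity
    (p K : ℝ) (hp : p ∈ Set.Ioo (0:ℝ) 1)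
    (hK : K = (1 + (1 - p) * p ^ (p / (1 - p)))⁻¹) :
    Real.logb 2 (p * (1 - K) / ((1 - p) * K))
      - 2 * p * Real.logb 2 (p * (1 - K) / ((1 - p) * K))
      - Real.logb 2 (p * (1 - p) * K / (1 - K)) = 0 := by
  obtain ⟨hp0, hp1⟩ := hp
  set a := p ^ (p / (1 - p))
  have ha : 0 < a := rpow_pos_of_pos hp0 _
  have hr : 0 < 1 + (1 - p) * a := by
    have := mul_pos (sub_pos.2 hp1) ha; linarith
  have hK0 : 0 < K := hK ▸ inv_pos.2 hr
  have hodds : (1 - K) / K = (1 - p) * a := one_sub_div_eq_of_eq_inv_one_add hr.ne' hK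
  have hx : p * (1 - K) / ((1 - p) * K) = p * a := by
    rw [mul_div_mul_comm, hodds]; field_simp
  have hy : p * (1 - p) * K / (1 - K) = p / a := by
    rw [mul_div_assoc, ← inv_div (1 - K) K, hodds]; field_simp
  have hlog : (1 - p) * log a = p * log p := by
    rw [log_rpow hp0]; field_simp
  rw [hx, hy, logb_mul hp0.ne' ha.ne', logb_div hp0.ne' ha.ne']
  unfold logb
  field_simp
  linear_combination 2 * hlog
end

section
/- Consider the simplex of probability vectors z = (z_{00}, z_{01}, z_{10}, z_{11}) with nonnegative entries summing to 1. Define ρ = log₂(3/2), h(z) = max(z_{10}, z_{01}), rewards g(z,0) = log₂(3/2) + (z_{00} + 3z_{10} − 1)/2 and g(z,1) = log₂(3/2) + (z_{11} + 3z_{01} − 1)/2, and state updates F(z,0) = (z_{00}+z_{10}, (z_{01}+z_{11})/2, (z_{01}+z_{11})/2, 0) and F(z,1) = (0, (z_{00}+z_{10})/2, (z_{00}+z_{10})/2, 0). Then for every probability vector z, ρ + h(z) = max( g(z,0) + h(F(z,0)), g(z,1) + h(F(z,1)) ). -/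
open Real

/-- Bellman equation verification for the trapdoor channel DP:
with `ρ = log₂(3/2)`, `h(z) = max(z₁₀, z₀₁)`, rewards `g(z,0)`, `g(z,1)` and
deterministic state updates `F(z,0)`, `F(z,1)` as given, for every probability
vector `z = (z₀₀, z₀₁, z₁₀, z₁₁)` on `Q × S`,
`ρ + h(z) = max(g(z,0) + h(F(z,0)), g(z,1) + h(F(z,1)))`. -/
theorem trapdoor_bellman_verification
    (z00 z01 z10 z11 : ℝ)
    (hnn : 0 ≤ z00 ∧ 0 ≤ z01 ∧ 0 ≤ z10 ∧ 0 ≤ z11)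
    (hsum : z00 + z01 + z10 + z11 = 1) :
    Real.logb 2 (3/2) + max z10 z01 =
      max
        ((Real.logb 2 (3/2) + (z00 + 3 * z10 - 1) / 2)
          + max ((z01 + z11) / 2) ((z01 + z11) / 2))
        ((Real.logb 2 (3/2) + (z11 + 3 * z01 - 1) / 2)
          + max ((z00 + z10) / 2) ((z00 + z10) / 2)) := by
  rw [max_self, max_self]
  have h1 : (Real.logb 2 (3/2) + (z00 + 3 * z10 - 1) / 2) + (z01 + z11) / 2
      = Real.logb 2 (3/2) + z10 := by linarith
  have h2 : (Real.logb 2 (3/2) + (z11 + 3 * z01 - 1) / 2) + (z00 + z10) / 2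
      = Real.logb 2 (3/2) + z01 := by linarith
  rw [h1, h2, ← max_add_add_left]
end
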